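/- Let q be a prime power and let m, d', ε be integers with 1 ≤ d' ≤ m and ε ≥ 1. Let X ⊆ F_q^m be a code in which any two distinct words are at Hamming distance at least d', such that the zero vector belongs to X and every nonzero word of X has weight at least d' + ε. Then |X| ≤ A_q(m,d') − |B(ε,m)|/|B(d'−1,m)| + 1 (an inequality of rational numbers). -/

import Mathlib

/-!
Among the codes of minimum distance `d'` inside the Hamming ball `B(ε,m)` choose one, `Y`, of
maximal size. By maximality the balls of radius `d' - 1` around the words of `Y` cover `B(ε,m)`, so
`|Y| ≥ |B(ε,m)| / |B(d'-1,m)|`. A nonzero word of `X` has weight at least `d' + ε`, hence is at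
distance at least `d'` from every word of `B(ε,m)`, so `(X \ {0}) ∪ Y` is a code of minimum
distance `d'` with `|X| - 1 + |Y|` words, and this is at most `A_q(m,d')`.
-/

/-- `|B(l,m)| = ∑_{j=0}^{l} C(m,j)(q−1)^j`, the number of vectors of `F_q^m`
of Hamming weight at most `l`. -/
def ballCard (q l m : ℕ) : ℕ := ∑ j ∈ Finset.range (l + 1), m.choose j * (q - 1) ^ j

/-- `A_q(n,d)`: the maximum cardinality of a (nonempty) code `C ⊆ F^n` in which any two
distinct words are at Hamming distance at least `d`. -/
noncomputable def maxCodeCard (F : Type) [Fintype F] [DecidableEq F] (n d : ℕ) : ℕ :=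
  sSup {M | ∃ C : Finset (Fin n → F), C.Nonempty ∧ C.card = M ∧
    ∀ c ∈ C, ∀ c' ∈ C, c ≠ c' → d ≤ hammingDist c c'}

open Finset

section Hamming

variable {ι β : Type*} [Fintype ι] [DecidableEq β]

lemma le_hammingDist_of_add_le_hammingNorm [Zero β] {x y : ι → β} {d ε : ℕ}
    (hx : d + ε ≤ hammingNorm x) (hy : hammingNorm y ≤ ε) : d ≤ hammingDist x y := by
  have := hammingDist_triangle x y 0
  rw [hammingDist_zero_right, hammingDist_zero_right] at this
  omega

lemma exists_code_subset_covering (S : Finset (ι → β)) {d : ℕ} (hd : 0 < d) :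
    ∃ Y ⊆ S, (Y : Set (ι → β)).Pairwise (fun c c' => d ≤ hammingDist c c') ∧
      ∀ x ∈ S, ∃ y ∈ Y, hammingDist x y < d := by
  classical
  obtain ⟨Y, hY, hmax⟩ := exists_max_image
    (S.powerset.filter fun Y : Finset (ι → β) =>
      (Y : Set (ι → β)).Pairwise (fun c c' => d ≤ hammingDist c c')) card ⟨∅, by simp⟩
  rw [mem_filter, mem_powerset] at hY
  refine ⟨Y, hY.1, hY.2, fun x hx => ?_⟩
  by_contra! hfar
  have hxY : x ∉ Y := fun hxY => absurd (hfar x hxY) (by simpa using hd.ne')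
  have := hmax (insert x Y) <| by
    rw [mem_filter, mem_powerset, coe_insert, Set.pairwise_insert]
    exact ⟨insert_subset hx hY.1, hY.2,
      fun y hy _ => ⟨hfar y hy, hammingDist_comm x y ▸ hfar y hy⟩⟩
  rw [card_insert_of_notMem hxY] at this
  omega

variable [DecidableEq ι] [Fintype β]

lemma card_filter_support_eq [Zero β] (s : Finset ι) :
    #{v : ι → β | ({i | v i ≠ 0} : Finset ι) = s} = (Fintype.card β - 1) ^ #s := by
  have hfiber : ({v : ι → β | ({i | v i ≠ 0} : Finset ι) = s} : Finset _)
      = Fintype.piFinset fun i => if i ∈ s then {0}ᶜ else {0} := by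
    ext v
    simp only [mem_filter, mem_univ, true_and, Fintype.mem_piFinset, Finset.ext_iff]
    refine forall_congr' fun i => ?_
    split_ifs with hi <;> simp [hi]
  simp only [hfiber, Fintype.card_piFinset, apply_ite card, card_compl, card_singleton]
  rw [Fintype.prod_ite_mem, prod_const]

lemma card_filter_hammingNorm_eq [Zero β] (j : ℕ) :
    #{v : ι → β | hammingNorm v = j} =
      (Fintype.card ι).choose j * (Fintype.card β - 1) ^ j := by
  rw [card_eq_sum_card_fiberwise (f := fun v : ι → β => ({i | v i ≠ 0} : Finset ι))
    (t := powersetCard j univ) (fun v hv => by simpa [hammingNorm] using hv)]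
  rw [sum_const_nat fun s hs => ?_, card_powersetCard, card_univ]
  rw [mem_powersetCard_univ] at hs
  rw [← hs, ← card_filter_support_eq, filter_filter]
  congr 1
  ext v
  simp only [mem_filter, mem_univ, true_and, and_iff_right_iff_imp]
  rintro rfl
  rfl

lemma card_filter_hammingNorm_le [Zero β] (l : ℕ) :
    #{v : ι → β | hammingNorm v ≤ l} = ballCard (Fintype.card β) l (Fintype.card ι) := by
  rw [card_eq_sum_card_fiberwise (f := hammingNorm) (t := range (l + 1))
    (fun v hv => by simpa [Nat.lt_succ_iff] using hv), ballCard]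
  refine sum_congr rfl fun j hj => ?_
  rw [← card_filter_hammingNorm_eq]
  congr 1
  ext v
  simp_all

lemma card_filter_hammingDist_le [AddGroup β] (y : ι → β) (r : ℕ) :
    #{v : ι → β | hammingDist v y ≤ r} = ballCard (Fintype.card β) r (Fintype.card ι) := by
  rw [← card_filter_hammingNorm_le]
  exact card_equiv (Equiv.addLeft (-y)) fun v => by
    rw [mem_filter, mem_filter, hammingDist_comm, hammingDist_eq_hammingNorm]
    simp

lemma card_le_card_mul_ballCard [AddGroup β] {S Y : Finset (ι → β)} {r : ℕ}
    (hcover : ∀ x ∈ S, ∃ y ∈ Y, hammingDist x y ≤ r) :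
    #S ≤ #Y * ballCard (Fintype.card β) r (Fintype.card ι) :=
  calc #S ≤ #(Y.biUnion fun y => {v | hammingDist v y ≤ r}) := card_le_card fun x hx => by
          obtain ⟨y, hy, hxy⟩ := hcover x hx
          exact mem_biUnion.2 ⟨y, hy, by simpa using hxy⟩
    _ ≤ ∑ y ∈ Y, #{v : ι → β | hammingDist v y ≤ r} := card_biUnion_le
    _ = #Y * ballCard (Fintype.card β) r (Fintype.card ι) := by
          simp [card_filter_hammingDist_le]

end Hamming

lemma ballCard_pos (q l m : ℕ) : 0 < ballCard q l m :=
  lt_of_lt_of_le (by simp) (single_le_sum (f := fun j => m.choose j * (q - 1) ^ j)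
    (fun _ _ => Nat.zero_le _) (mem_range.2 l.succ_pos))

lemma card_le_maxCodeCard {F : Type} [Fintype F] [DecidableEq F] {n d : ℕ}
    {C : Finset (Fin n → F)} (hne : C.Nonempty)
    (hC : (C : Set (Fin n → F)).Pairwise (fun c c' => d ≤ hammingDist c c')) :
    #C ≤ maxCodeCard F n d :=
  le_csSup ⟨Fintype.card (Fin n → F), by rintro _ ⟨C, -, rfl, -⟩; exact card_le_univ C⟩
    ⟨C, hne, rfl, fun _ hc _ hc' h => hC hc hc' h⟩

theorem size_bound_with_zero_general (q m d' ε : ℕ)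
    (F : Type) [Field F] [Fintype F] [DecidableEq F] (hF : Fintype.card F = q)
    (hd1 : 1 ≤ d')
    (X : Finset (Fin m → F))
    (hdist : ∀ c ∈ X, ∀ c' ∈ X, c ≠ c' → d' ≤ hammingDist c c')
    (h0 : (0 : Fin m → F) ∈ X)
    (hw : ∀ c ∈ X, c ≠ 0 → d' + ε ≤ hammingNorm c) :
    (X.card : ℚ) ≤ (maxCodeCard F m d' : ℚ)
      - (ballCard q ε m : ℚ) / (ballCard q (d' - 1) m : ℚ) + 1 := by
  obtain ⟨Y, hYball, hYcode, hcover⟩ :=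
    exists_code_subset_covering {v : Fin m → F | hammingNorm v ≤ ε} hd1
  have hballs : ballCard q ε m ≤ #Y * ballCard q (d' - 1) m := by
    have := card_le_card_mul_ballCard (r := d' - 1) fun x hx =>
      (hcover x hx).imp fun _ => And.imp_right Nat.le_sub_one_of_lt
    rwa [card_filter_hammingNorm_le, Fintype.card_fin, hF] at this
  have hfar : ∀ x ∈ X.erase 0, ∀ y ∈ Y, d' ≤ hammingDist x y := fun x hx y hy =>
    le_hammingDist_of_add_le_hammingNorm (hw x (mem_of_mem_erase hx) (ne_of_mem_erase hx))
      (mem_filter.1 (hYball hy)).2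
  have hdisj : Disjoint (X.erase 0) Y :=
    disjoint_left.2 fun x hx hy => by simpa using (hfar x hx x hy).trans_lt' hd1
  obtain ⟨y₀, hy₀, -⟩ := hcover 0 (by simp)
  have hcode : #(X.erase 0 ∪ Y) ≤ maxCodeCard F m d' := by
    refine card_le_maxCodeCard ⟨y₀, mem_union_right _ hy₀⟩ ?_
    rw [coe_union, Set.pairwise_union]
    exact ⟨fun x hx x' hx' => hdist x (mem_of_mem_erase hx) x' (mem_of_mem_erase hx'), hYcode,
      fun x hx y hy _ => ⟨hfar x hx y hy, hammingDist_comm x y ▸ hfar x hx y hy⟩⟩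
  rw [card_union_of_disjoint hdisj, card_erase_of_mem h0] at hcode
  have hratio : (ballCard q ε m : ℚ) / ballCard q (d' - 1) m ≤ #Y := by
    rw [div_le_iff₀ (by exact_mod_cast ballCard_pos q (d' - 1) m)]
    exact_mod_cast hballs
  have hcode' : (#X : ℚ) - 1 + #Y ≤ maxCodeCard F m d' := by
    have := (Nat.cast_le (α := ℚ)).2 hcode
    rwa [Nat.cast_add, Nat.cast_sub (card_pos.2 ⟨0, h0⟩), Nat.cast_one] at this
  linarith

/-- A code of distance `d'` containing `0` whose nonzero words all have weight at least
`d' + ε` has size at most `A_q(m,d') − |B(ε,m)|/|B(d'−1,m)| + 1`. -/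
theorem size_bound_with_zero (q m d' ε : ℕ) (hq : IsPrimePow q)
    (F : Type) [Field F] [Fintype F] [DecidableEq F] (hF : Fintype.card F = q)
    (hd1 : 1 ≤ d') (hdm : d' ≤ m) (hε : 1 ≤ ε)
    (X : Finset (Fin m → F))
    (hdist : ∀ c ∈ X, ∀ c' ∈ X, c ≠ c' → d' ≤ hammingDist c c')
    (h0 : (0 : Fin m → F) ∈ X)
    (hw : ∀ c ∈ X, c ≠ 0 → d' + ε ≤ hammingNorm c) :
    (X.card : ℚ) ≤ (maxCodeCard F m d' : ℚ)
      - (ballCard q ε m : ℚ) / (ballCard q (d' - 1) m : ℚ) + 1 :=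
  size_bound_with_zero_general q m d' ε F hF hd1 X hdist h0 hw
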